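/- (Feasibility of the Lyapunov constraint at the successor time) Suppose at time $t$ the optimal contingency cost is $J^*_t = \sum_{k=0}^{N-1} \ell(x_k - \bar{x}, u_k - \bar{u}) + V$ where $x_N = \bar{x}$, $\ell \ge 0$ with $\ell(0,0)=0$, and $V \ge 0$. Define the updated bound $\hat{J}_{t+1} := J^*_t - \ell(x_0 - \bar{x}, u_0 - \bar{u})$. Then the shifted candidate trajectory ($\tilde{x}_k := x_{k+1}$, $\tilde{u}_k := u_{k+1}$, last input $\bar{u}$, same equilibrium $\bar{x}$ and offset cost $V$) has cost $\tilde{J} = \hat{J}_{t+1}$; in particular $\tilde{J} \le \hat{J}_{t+1}$, i.e., the Lyapunov constraint $J \le \hat{J}_{t+1}$ admits a feasible point at time $t+1$. -/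
import Mathlib


theorem stmt_17 (dx du N : ℕ) (hN : 1 ≤ N)
    (ℓ : EuclideanSpace ℝ (Fin dx) → EuclideanSpace ℝ (Fin du) → ℝ)
    (hℓnn : ∀ e d, 0 ≤ ℓ e d) (hℓ0 : ℓ 0 0 = 0)
    (V : ℝ) (hV : 0 ≤ V)
    (x : ℕ → EuclideanSpace ℝ (Fin dx)) (u : ℕ → EuclideanSpace ℝ (Fin du))
    (xb : EuclideanSpace ℝ (Fin dx)) (ub : EuclideanSpace ℝ (Fin du))
    (hxN : x N = xb)
    (Jstar : ℝ)
    (hJstar : Jstar = (∑ k ∈ Finset.range N, ℓ (x k - xb) (u k - ub)) + V)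
    (Jhat : ℝ) (hJhat : Jhat = Jstar - ℓ (x 0 - xb) (u 0 - ub))
    (xt : ℕ → EuclideanSpace ℝ (Fin dx)) (ut : ℕ → EuclideanSpace ℝ (Fin du))
    (hxt : ∀ k < N, xt k = x (k+1)) (hxtN : xt N = xb)
    (hut : ∀ k < N - 1, ut k = u (k+1)) (hutN : ut (N-1) = ub) :
    (∑ k ∈ Finset.range N, ℓ (xt k - xb) (ut k - ub)) + V = Jhat ∧
    (∑ k ∈ Finset.range N, ℓ (xt k - xb) (ut k - ub)) + V ≤ Jhat := by
  have hNe : N = (N - 1) + 1 := by omega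
  have hlast : ℓ (xt (N - 1) - xb) (ut (N - 1) - ub) = 0 := by
    rw [hutN, hxt (N - 1) (by omega), show N - 1 + 1 = N from by omega, hxN,
      sub_self, sub_self, hℓ0]
  have hsum : (∑ k ∈ Finset.range N, ℓ (xt k - xb) (ut k - ub))
      = ∑ k ∈ Finset.range (N - 1), ℓ (x (k + 1) - xb) (u (k + 1) - ub) := by
    rw [hNe, Finset.sum_range_succ, hlast, add_zero]
    exact Finset.sum_congr rfl fun k hk => by
      rw [Finset.mem_range] at hk
      rw [hxt k (by omega), hut k hk]
  have horig : (∑ k ∈ Finset.range N, ℓ (x k - xb) (u k - ub))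
      = (∑ k ∈ Finset.range (N - 1), ℓ (x (k + 1) - xb) (u (k + 1) - ub))
        + ℓ (x 0 - xb) (u 0 - ub) := by
    rw [hNe, Finset.sum_range_succ']; simp
  have heq : (∑ k ∈ Finset.range N, ℓ (xt k - xb) (ut k - ub)) + V = Jhat := by
    rw [hJhat, hJstar, horig, hsum]; ring
  exact ⟨heq, le_of_eq heq⟩
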